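/- arXiv:2307.00747 — 5 statements merged into one kernel-verified Lean document; each statement's English description precedes it below -/
import Mathlib

section
/- Let a, b be nonnegative integers with (a,b) ≠ (0,0). A tuple (x₀, y₀, z₀) of nonnegative integers satisfies a·x₀ + b·y₀ = (a+b)·z₀ if and only if it is a nonnegative integer linear combination of the three vectors (1,1,1), (a+b, 0, a)/gcd(a,b), and (0, a+b, b)/gcd(a,b). -/
/-- **The Key Lemma.** For nonnegative integers `a, b` with `(a,b) ≠ (0,0)`, a tuple
`(x, y, z)` of nonnegative integers satisfies `a·x + b·y = (a+b)·z` iff it is a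
nonnegative integer linear combination of `(1,1,1)`, `(a+b,0,a)/gcd(a,b)`,
`(0,a+b,b)/gcd(a,b)`. -/
theorem linset_key_lemma (a b : ℕ) (hab : (a, b) ≠ (0, 0)) (x y z : ℕ) :
    a * x + b * y = (a + b) * z ↔
      ∃ c₁ c₂ c₃ : ℕ,
        x = c₁ * 1 + c₂ * ((a + b) / Nat.gcd a b) + c₃ * 0 ∧
        y = c₁ * 1 + c₂ * 0 + c₃ * ((a + b) / Nat.gcd a b) ∧
        z = c₁ * 1 + c₂ * (a / Nat.gcd a b) + c₃ * (b / Nat.gcd a b) := by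
  have hg : 0 < Nat.gcd a b := by
    rcases Nat.eq_zero_or_pos (Nat.gcd a b) with h | h
    · exfalso; apply hab
      have := Nat.eq_zero_of_gcd_eq_zero_left h
      have := Nat.eq_zero_of_gcd_eq_zero_right h
      simp_all
    · exact h
  set g := Nat.gcd a b with hgdef
  obtain ⟨a', ha⟩ : g ∣ a := Nat.gcd_dvd_left a b
  obtain ⟨b', hb⟩ : g ∣ b := Nat.gcd_dvd_right a b
  have ha' : a / g = a' := by rw [ha, Nat.mul_div_cancel_left _ hg]
  have hb' : b / g = b' := by rw [hb, Nat.mul_div_cancel_left _ hg]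
  have hs : (a + b) / g = a' + b' := by
    rw [ha, hb, ← Nat.mul_add, Nat.mul_div_cancel_left _ hg]
  have hcop : Nat.Coprime a' b' := by
    have := Nat.coprime_div_gcd_div_gcd (m := a) (n := b) hg
    rwa [← hgdef, ha', hb'] at this
  rw [hs, ha', hb']
  constructor
  · intro h
    have h' : a' * x + b' * y = (a' + b') * z := by
      apply Nat.eq_of_mul_eq_mul_left hg
      rw [ha, hb] at h
      calc g * (a' * x + b' * y) = g * a' * x + g * b' * y := by ring
        _ = (g * a' + g * b') * z := h
        _ = g * ((a' + b') * z) := by ring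
    have hZ : (a' : ℤ) * x + b' * y = (a' + b') * z := by exact_mod_cast h'
    have hcopZ : IsCoprime (a' : ℤ) (b' : ℤ) := by
      rw [Int.isCoprime_iff_gcd_eq_one]
      simpa using hcop
    by_cases hzx : z ≤ x
    · rcases Nat.eq_zero_or_pos b' with hb0 | hb0
      · -- b = 0 case
        have hbz : b = 0 := by rw [hb, hb0, Nat.mul_zero]
        have ha1 : a' = 1 := by
          have : g = a := by rw [hgdef, hbz, Nat.gcd_zero_right]
          have hapos : 0 < a := by
            rcases Nat.eq_zero_or_pos a with h0 | h0
            · exfalso; exact hab (by simp [h0, hbz])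
            · exact h0
          exact Nat.eq_of_mul_eq_mul_left hapos (by rw [Nat.mul_one, ← this, ← ha]; exact this.symm)
        have hxz : x = z := by
          rw [hb0, ha1] at h'; omega
        refine ⟨min x y, x - min x y, y - min x y, ?_, ?_, ?_⟩ <;>
          simp [ha1, hb0] <;> omega
      · -- b' > 0
        have hyz : y ≤ z := by
          by_contra hc
          push_neg at hc
          have h1 : a' * z ≤ a' * x := Nat.mul_le_mul_left a' hzx
          have h2 : b' * z < b' * y := mul_lt_mul_of_pos_left hc (by exact_mod_cast hb0)
          nlinarith [h']
        have hdvd : (b' : ℤ) ∣ (a' : ℤ) * ((x : ℤ) - z) := ⟨(z : ℤ) - y, by linarith [hZ]⟩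
        obtain ⟨k, hk⟩ := hcopZ.symm.dvd_of_dvd_mul_left hdvd
        have hk0 : 0 ≤ k := by
          rcases le_or_gt 0 k with h0 | h0
          · exact h0
          · exfalso
            have : (b' : ℤ) * k < 0 := mul_neg_of_pos_of_neg (by exact_mod_cast hb0) h0
            have : (x : ℤ) - z < 0 := by linarith [hk]
            have : (z : ℤ) ≤ x := by exact_mod_cast hzx
            linarith
        have hzy : (z : ℤ) - y = a' * k := by
          have hb0' : (b' : ℤ) ≠ 0 := by exact_mod_cast hb0.ne'
          apply mul_left_cancel₀ hb0'
          have : (a' : ℤ) * ((x:ℤ) - z) = b' * ((z:ℤ) - y) := by linarith [hZ]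
          rw [hk] at this
          linarith [this]
        refine ⟨y, k.toNat, 0, ?_, ?_, ?_⟩
        · zify
          push_cast [Int.toNat_of_nonneg hk0]
          linear_combination hk + hzy
        · omega
        · zify
          push_cast [Int.toNat_of_nonneg hk0]
          linear_combination hzy
    · push_neg at hzx
      have hxz : x ≤ z := le_of_lt hzx
      rcases Nat.eq_zero_or_pos a' with ha0 | ha0
      · -- a = 0 case
        have haz : a = 0 := by rw [ha, ha0, Nat.mul_zero]
        have hb1 : b' = 1 := by
          have : g = b := by rw [hgdef, haz, Nat.gcd_zero_left]
          have hbpos : 0 < b := by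
            rcases Nat.eq_zero_or_pos b with h0 | h0
            · exfalso; exact hab (by simp [h0, haz])
            · exact h0
          exact Nat.eq_of_mul_eq_mul_left hbpos (by rw [Nat.mul_one, ← this, ← hb]; exact this.symm)
        have hyzeq : y = z := by
          rw [ha0, hb1] at h'; omega
        refine ⟨min x y, x - min x y, y - min x y, ?_, ?_, ?_⟩ <;>
          simp [ha0, hb1] <;> omega
      · -- a' > 0
        have hzy : z ≤ y := by
          by_contra hc
          push_neg at hc
          have h1 : b' * y ≤ b' * z := Nat.mul_le_mul_left b' (le_of_lt hc)
          have h2 : a' * x < a' * z := mul_lt_mul_of_pos_left hzx (by exact_mod_cast ha0)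
          nlinarith [h']
        have hdvd : (a' : ℤ) ∣ (b' : ℤ) * ((y : ℤ) - z) := ⟨(z : ℤ) - x, by linarith [hZ]⟩
        obtain ⟨k, hk⟩ := hcopZ.dvd_of_dvd_mul_left hdvd
        have hk0 : 0 ≤ k := by
          rcases le_or_gt 0 k with h0 | h0
          · exact h0
          · exfalso
            have : (a' : ℤ) * k < 0 := mul_neg_of_pos_of_neg (by exact_mod_cast ha0) h0
            have : (y : ℤ) - z < 0 := by linarith [hk]
            have : (z : ℤ) ≤ y := by exact_mod_cast hzy
            linarith
        have hzx' : (z : ℤ) - x = b' * k := by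
          have ha0' : (a' : ℤ) ≠ 0 := by exact_mod_cast ha0.ne'
          apply mul_left_cancel₀ ha0'
          have : (b' : ℤ) * ((y:ℤ) - z) = a' * ((z:ℤ) - x) := by linarith [hZ]
          rw [hk] at this
          linarith [this]
        refine ⟨x, 0, k.toNat, ?_, ?_, ?_⟩
        · omega
        · zify
          push_cast [Int.toNat_of_nonneg hk0]
          linear_combination hk + hzx'
        · zify
          push_cast [Int.toNat_of_nonneg hk0]
          linear_combination hzx'
  · rintro ⟨c₁, c₂, c₃, hx, hy, hz⟩
    subst hx hy hz
    rw [ha, hb]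
    ring
end

section
/- Let Q₁(x,y) = x² + xy + y², Q₂(x,y) = 4(x² + xy + y²), and Q₃(x,y) = x² + 3y². Then for every integer m ≥ 0, (1/3)·r_{Q₁}(m) + (2/3)·r_{Q₂}(m) = r_{Q₃}(m), where r_Q(m) denotes the number of pairs (x,y) ∈ ℤ² with Q(x,y) = m. -/
open Set

private lemma theta_finite_aux (m : ℕ) :
    {p : ℤ × ℤ | p.1 ^ 2 + p.1 * p.2 + p.2 ^ 2 = (m : ℤ)}.Finite := by
  apply Set.Finite.subset
    ((Set.finite_Icc (-(m : ℤ) - 1) ((m : ℤ) + 1)).prod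
      (Set.finite_Icc (-(m : ℤ) - 1) ((m : ℤ) + 1)))
  rintro ⟨x, y⟩ h
  simp only [mem_setOf_eq] at h
  constructor <;> simp only [mem_Icc] <;> constructor <;>
    nlinarith [sq_nonneg (x + y), sq_nonneg x, sq_nonneg y, sq_nonneg (x - 1),
      sq_nonneg (x + 1), sq_nonneg (y - 1), sq_nonneg (y + 1)]

private lemma theta_key (m : ℕ) :
    ({p : ℤ × ℤ | p.1 ^ 2 + p.1 * p.2 + p.2 ^ 2 = (m : ℤ)}).ncard
      + 2 * ({p : ℤ × ℤ | 4 * (p.1 ^ 2 + p.1 * p.2 + p.2 ^ 2) = (m : ℤ)}).ncard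
      = 3 * ({p : ℤ × ℤ | p.1 ^ 2 + 3 * p.2 ^ 2 = (m : ℤ)}).ncard := by
  set S1 : Set (ℤ × ℤ) := {p | p.1 ^ 2 + p.1 * p.2 + p.2 ^ 2 = (m : ℤ)} with hS1
  set S2 : Set (ℤ × ℤ) := {p | 4 * (p.1 ^ 2 + p.1 * p.2 + p.2 ^ 2) = (m : ℤ)} with hS2
  set S3 : Set (ℤ × ℤ) := {p | p.1 ^ 2 + 3 * p.2 ^ 2 = (m : ℤ)} with hS3
  set Poe : Set (ℤ × ℤ) := {p | p ∈ S1 ∧ p.1 % 2 = 1 ∧ p.2 % 2 = 0} with hPoe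
  set Peo : Set (ℤ × ℤ) := {p | p ∈ S1 ∧ p.1 % 2 = 0 ∧ p.2 % 2 = 1} with hPeo
  set Poo : Set (ℤ × ℤ) := {p | p ∈ S1 ∧ p.1 % 2 = 1 ∧ p.2 % 2 = 1} with hPoo
  set Pee : Set (ℤ × ℤ) := {p | p ∈ S1 ∧ p.1 % 2 = 0 ∧ p.2 % 2 = 0} with hPee
  have hfin : S1.Finite := theta_finite_aux m
  have hfoe : Poe.Finite := hfin.subset (by rintro p ⟨h, -⟩; exact h)
  have hfeo : Peo.Finite := hfin.subset (by rintro p ⟨h, -⟩; exact h)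
  have hfoo : Poo.Finite := hfin.subset (by rintro p ⟨h, -⟩; exact h)
  have hfee : Pee.Finite := hfin.subset (by rintro p ⟨h, -⟩; exact h)
  -- partition of S1
  have hu : S1 = (Poe ∪ Peo) ∪ (Poo ∪ Pee) := by
    ext ⟨x, y⟩
    simp only [hS1, hPoe, hPeo, hPoo, hPee, mem_setOf_eq, mem_union]
    constructor
    · intro h; simp only [h, true_and]; omega
    · rintro ((⟨h, -⟩ | ⟨h, -⟩) | (⟨h, -⟩ | ⟨h, -⟩)) <;> exact h
  have hsplit : S1.ncard = Poe.ncard + Peo.ncard + Poo.ncard + Pee.ncard := by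
    rw [hu, Set.ncard_union_eq ?_ (hfoe.union hfeo) (hfoo.union hfee),
      Set.ncard_union_eq ?_ hfoe hfeo, Set.ncard_union_eq ?_ hfoo hfee]
    · ring
    · rw [Set.disjoint_left]
      intro p hp hq; have h1 := hp.2; have h2 := hq.2; omega
    · rw [Set.disjoint_left]
      intro p hp hq; have h1 := hp.2; have h2 := hq.2; omega
    · rw [Set.disjoint_left]
      rintro p (hp | hp) (hq | hq) <;>
        · have h1 := hp.2; have h2 := hq.2; omega
  -- rotation sigma
  have hσinj : Function.Injective (fun p : ℤ × ℤ => ((p.2, -p.1 - p.2) : ℤ × ℤ)) := by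
    rintro ⟨a, b⟩ ⟨c, d⟩ h
    simp only [Prod.ext_iff] at h ⊢
    omega
  have him1 : Peo = (fun p : ℤ × ℤ => ((p.2, -p.1 - p.2) : ℤ × ℤ)) '' Poe := by
    ext ⟨x, y⟩
    simp only [hPeo, hPoe, hS1, mem_setOf_eq, mem_image, Prod.ext_iff, Prod.exists]
    constructor
    · rintro ⟨h, h1, h2⟩
      exact ⟨-x - y, x, ⟨by linear_combination h, by omega, by omega⟩, rfl, by ring⟩
    · rintro ⟨a, b, ⟨h, h1, h2⟩, rfl, rfl⟩
      exact ⟨by linear_combination h, by omega, by omega⟩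
  have him2 : Poo = (fun p : ℤ × ℤ => ((p.2, -p.1 - p.2) : ℤ × ℤ)) '' Peo := by
    ext ⟨x, y⟩
    simp only [hPoo, hPeo, hS1, mem_setOf_eq, mem_image, Prod.ext_iff, Prod.exists]
    constructor
    · rintro ⟨h, h1, h2⟩
      exact ⟨-x - y, x, ⟨by linear_combination h, by omega, by omega⟩, rfl, by ring⟩
    · rintro ⟨a, b, ⟨h, h1, h2⟩, rfl, rfl⟩
      exact ⟨by linear_combination h, by omega, by omega⟩
  have hcard1 : Peo.ncard = Poe.ncard := by
    rw [him1, Set.ncard_image_of_injective _ hσinj]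
  have hcard2 : Poo.ncard = Poe.ncard := by
    rw [him2, Set.ncard_image_of_injective _ hσinj, hcard1]
  -- doubling: S2 ≃ Pee
  have him3 : Pee = (fun p : ℤ × ℤ => ((2 * p.1, 2 * p.2) : ℤ × ℤ)) '' S2 := by
    ext ⟨x, y⟩
    simp only [hPee, hS1, hS2, mem_setOf_eq, mem_image, Prod.ext_iff, Prod.exists]
    constructor
    · rintro ⟨h, h1, h2⟩
      obtain ⟨a, rfl⟩ : ∃ a, x = 2 * a := ⟨x / 2, by omega⟩
      obtain ⟨b, rfl⟩ : ∃ b, y = 2 * b := ⟨y / 2, by omega⟩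
      exact ⟨a, b, by linear_combination h, rfl, rfl⟩
    · rintro ⟨a, b, h, rfl, rfl⟩
      exact ⟨by linear_combination h, by omega, by omega⟩
  have hcard3 : Pee.ncard = S2.ncard := by
    rw [him3, Set.ncard_image_of_injective _ (by
      rintro ⟨a, b⟩ ⟨c, d⟩ h
      simp only [Prod.ext_iff] at h ⊢
      omega)]
  -- y even: S3 ≃ Poe ∪ Pee
  have him4 : Poe ∪ Pee = (fun p : ℤ × ℤ => ((p.1 - p.2, 2 * p.2) : ℤ × ℤ)) '' S3 := by
    ext ⟨x, y⟩
    simp only [hPoe, hPee, hS1, hS3, mem_union, mem_setOf_eq, mem_image, Prod.ext_iff,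
      Prod.exists]
    constructor
    · rintro (⟨h, h1, h2⟩ | ⟨h, h1, h2⟩) <;>
      · obtain ⟨b, rfl⟩ : ∃ b, y = 2 * b := ⟨y / 2, by omega⟩
        exact ⟨x + b, b, by linear_combination h, by ring, rfl⟩
    · rintro ⟨a, b, h, rfl, rfl⟩
      have hm : (a - b) ^ 2 + (a - b) * (2 * b) + (2 * b) ^ 2 = (m : ℤ) := by
        linear_combination h
      rcases Int.even_or_odd a with ⟨c, hc⟩ | ⟨c, hc⟩
      · rcases Int.even_or_odd b with ⟨d, hd⟩ | ⟨d, hd⟩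
        · exact Or.inr ⟨hm, by omega, by omega⟩
        · exact Or.inl ⟨hm, by omega, by omega⟩
      · rcases Int.even_or_odd b with ⟨d, hd⟩ | ⟨d, hd⟩
        · exact Or.inl ⟨hm, by omega, by omega⟩
        · exact Or.inr ⟨hm, by omega, by omega⟩
  have hcard4 : Poe.ncard + Pee.ncard = S3.ncard := by
    have d4 : Disjoint Poe Pee := by
      rw [Set.disjoint_left]
      intro p hp hq; have h1 := hp.2; have h2 := hq.2; omega
    rw [← Set.ncard_union_eq d4 hfoe hfee, him4, Set.ncard_image_of_injective _ (by
        rintro ⟨a, b⟩ ⟨c, d⟩ h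
        simp only [Prod.ext_iff] at h ⊢
        omega)]
  omega

/-- The nontrivial 3-term theta relation:
`(1/3)·r_{Q₁}(m) + (2/3)·r_{Q₂}(m) = r_{Q₃}(m)` for `Q₁ = x²+xy+y²`,
`Q₂ = 4(x²+xy+y²)`, `Q₃ = x²+3y²`. -/
theorem nontrivial_theta_relation (m : ℕ) :
    (1 / 3 : ℝ) * (Nat.card {p : ℤ × ℤ // p.1 ^ 2 + p.1 * p.2 + p.2 ^ 2 = (m : ℤ)}) +
      (2 / 3 : ℝ) * (Nat.card {p : ℤ × ℤ // 4 * (p.1 ^ 2 + p.1 * p.2 + p.2 ^ 2) = (m : ℤ)}) =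
      (Nat.card {p : ℤ × ℤ // p.1 ^ 2 + 3 * p.2 ^ 2 = (m : ℤ)}) := by
  have h1 : Nat.card {p : ℤ × ℤ // p.1 ^ 2 + p.1 * p.2 + p.2 ^ 2 = (m : ℤ)} =
      ({p : ℤ × ℤ | p.1 ^ 2 + p.1 * p.2 + p.2 ^ 2 = (m : ℤ)}).ncard :=
    Nat.card_coe_set_eq _
  have h2 : Nat.card {p : ℤ × ℤ // 4 * (p.1 ^ 2 + p.1 * p.2 + p.2 ^ 2) = (m : ℤ)} =
      ({p : ℤ × ℤ | 4 * (p.1 ^ 2 + p.1 * p.2 + p.2 ^ 2) = (m : ℤ)}).ncard :=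
    Nat.card_coe_set_eq _
  have h3 : Nat.card {p : ℤ × ℤ // p.1 ^ 2 + 3 * p.2 ^ 2 = (m : ℤ)} =
      ({p : ℤ × ℤ | p.1 ^ 2 + 3 * p.2 ^ 2 = (m : ℤ)}).ncard :=
    Nat.card_coe_set_eq _
  have key := theta_key m
  rw [h1, h2, h3]
  have : (({p : ℤ × ℤ | p.1 ^ 2 + p.1 * p.2 + p.2 ^ 2 = (m : ℤ)}).ncard : ℝ)
      + 2 * (({p : ℤ × ℤ | 4 * (p.1 ^ 2 + p.1 * p.2 + p.2 ^ 2) = (m : ℤ)}).ncard : ℝ)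
      = 3 * (({p : ℤ × ℤ | p.1 ^ 2 + 3 * p.2 ^ 2 = (m : ℤ)}).ncard : ℝ) := by
    exact_mod_cast congrArg (Nat.cast : ℕ → ℝ) key
  linarith
end

section
/- Let m be a nonnegative integer with m ≡ 1 (mod 2) representable as m = a² + 3b² with a,b ∈ ℤ. Then the number of integer solutions to x² + xy + y² = m is exactly three times the number of integer solutions to x² + 3y² = m. -/
theorem sq_emod_two' (w : ℤ) : w^2 % 2 = w % 2 := by
  obtain ⟨k, hk⟩|⟨k, hk⟩ := Int.even_or_odd w
  · have h1 : w^2 = 2*(2*k^2) := by subst hk; ring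
    omega
  · have h1 : w^2 = 2*(2*k^2+2*k)+1 := by subst hk; ring
    omega

theorem odd_sum_of_odd' (u v m : ℤ) (hm : m % 2 = 1) (h : u^2 + 3*v^2 = m) :
    (u + v) % 2 = 1 := by
  have hA := sq_emod_two' u
  have hB := sq_emod_two' v
  generalize u^2 = A at hA h
  generalize v^2 = B at hB h
  omega

noncomputable def threeEquiv (m : ℤ) (hm : m % 2 = 1) :
    {p : ℤ × ℤ // p.1 ^ 2 + p.1 * p.2 + p.2 ^ 2 = m} ≃
      Fin 3 × {p : ℤ × ℤ // p.1 ^ 2 + 3 * p.2 ^ 2 = m} where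
  toFun s :=
    if h : s.1.2 % 2 = 0 then
      (0, ⟨(s.1.1 + s.1.2 / 2, s.1.2 / 2), by
        obtain ⟨⟨x, y⟩, hs⟩ := s
        simp only at h ⊢
        obtain ⟨k, hk⟩ : ∃ k, y = 2 * k := ⟨y / 2, by omega⟩
        subst hk
        simp only [Int.mul_ediv_cancel_left _ (by norm_num : (2:ℤ) ≠ 0)]
        linear_combination hs⟩)
    else if h2 : s.1.1 % 2 = 0 then
      (1, ⟨(-s.1.2 - s.1.1 / 2, s.1.1 / 2), by
        obtain ⟨⟨x, y⟩, hs⟩ := s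
        simp only at h2 ⊢
        obtain ⟨k, hk⟩ : ∃ k, x = 2 * k := ⟨x / 2, by omega⟩
        subst hk
        simp only [Int.mul_ediv_cancel_left _ (by norm_num : (2:ℤ) ≠ 0)]
        linear_combination hs⟩)
    else
      (2, ⟨((s.1.2 - s.1.1) / 2, (-(s.1.1 + s.1.2)) / 2), by
        obtain ⟨⟨x, y⟩, hs⟩ := s
        simp only at h h2 ⊢
        obtain ⟨k, hk⟩ : ∃ k, y - x = 2 * k := ⟨(y - x) / 2, by omega⟩
        obtain ⟨l, hl⟩ : ∃ l, -(x + y) = 2 * l := ⟨(-(x+y)) / 2, by omega⟩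
        rw [hk, hl]
        simp only [Int.mul_ediv_cancel_left _ (by norm_num : (2:ℤ) ≠ 0)]
        have hx : x = -k - l := by omega
        have hy : y = k - l := by omega
        subst hx; subst hy
        linear_combination hs⟩)
  invFun q :=
    if q.1 = 0 then
      ⟨(q.2.1.1 - q.2.1.2, 2 * q.2.1.2), by
        obtain ⟨c, ⟨⟨u, v⟩, ht⟩⟩ := q
        simp only
        linear_combination ht⟩
    else if q.1 = 1 then
      ⟨(2 * q.2.1.2, -q.2.1.1 - q.2.1.2), by
        obtain ⟨c, ⟨⟨u, v⟩, ht⟩⟩ := q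
        simp only
        linear_combination ht⟩
    else
      ⟨(-q.2.1.1 - q.2.1.2, q.2.1.1 - q.2.1.2), by
        obtain ⟨c, ⟨⟨u, v⟩, ht⟩⟩ := q
        simp only
        linear_combination ht⟩
  left_inv := by
    rintro ⟨⟨x, y⟩, hs⟩
    by_cases h : y % 2 = 0
    · simp only [h, dif_pos, if_pos, Subtype.mk.injEq, Prod.mk.injEq]
      constructor <;> omega
    · by_cases h2 : x % 2 = 0
      · simp only [h, h2, dif_neg, dif_pos, not_false_iff,
          show ¬ (1 : Fin 3) = 0 by decide, if_false, if_true, if_pos, if_neg,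
          Subtype.mk.injEq, Prod.mk.injEq]
        constructor <;> omega
      · simp only [h, h2, dif_neg, not_false_iff,
          show ¬ (2 : Fin 3) = 0 by decide, show ¬ (2 : Fin 3) = 1 by decide,
          if_false, Subtype.mk.injEq, Prod.mk.injEq]
        constructor <;> omega
  right_inv := by
    rintro ⟨c, ⟨⟨u, v⟩, ht⟩⟩
    have huv : (u + v) % 2 = 1 := odd_sum_of_odd' u v m hm ht
    fin_cases c
    · have hx : (2 * v) % 2 = 0 := by omega
      simp only [hx, Fin.mk_zero, Fin.isValue, if_true, dif_pos,
        Prod.mk.injEq, Subtype.mk.injEq]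
      refine ⟨trivial, ?_, ?_⟩ <;> omega
    · have hy : ¬ (-u - v) % 2 = 0 := by omega
      have hx : (2 * v) % 2 = 0 := by omega
      simp only [hy, hx, Fin.mk_one, Fin.isValue, show ¬ (1 : Fin 3) = 0 by decide,
        if_false, if_true, dif_neg, dif_pos, not_false_iff, Prod.mk.injEq, Subtype.mk.injEq]
      refine ⟨trivial, ?_, ?_⟩ <;> omega
    · have hy : ¬ (u - v) % 2 = 0 := by omega
      have hx : ¬ (-u - v) % 2 = 0 := by omega
      simp only [hy, hx, Fin.isValue, show (⟨2, by norm_num⟩ : Fin 3) = 2 from rfl, show ¬ (2 : Fin 3) = 0 by decide,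
        show ¬ (2 : Fin 3) = 1 by decide, if_false, dif_neg, not_false_iff,
        Prod.mk.injEq, Subtype.mk.injEq]
      refine ⟨trivial, ?_, ?_⟩ <;> omega

/-- If `m` is odd and representable as `a² + 3b²`, then the number of integer solutions
of `x² + xy + y² = m` is three times the number of integer solutions of `x² + 3y² = m`. -/
theorem odd_case_three_to_one (m : ℕ) (hodd : Odd m) (a b : ℤ)
    (hrep : (m : ℤ) = a ^ 2 + 3 * b ^ 2) :
    Nat.card {p : ℤ × ℤ // p.1 ^ 2 + p.1 * p.2 + p.2 ^ 2 = (m : ℤ)} =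
      3 * Nat.card {p : ℤ × ℤ // p.1 ^ 2 + 3 * p.2 ^ 2 = (m : ℤ)} := by
  have hm : (m : ℤ) % 2 = 1 := by
    obtain ⟨k, hk⟩ := hodd; omega
  rw [Nat.card_congr (threeEquiv (m : ℤ) hm), Nat.card_prod, Nat.card_eq_fintype_card,
    Fintype.card_fin]
end

section
/- The relation ⪯ (defined by x ⪯ y iff E_i(x) ≤ E_i(y) for i = 1,2,3 with E₁(x₁,x₂)=x₂², E₂(x₁,x₂)=x₁²+x₂², E₃(x₁,x₂)=x₁²+x₁x₂+x₂²) is a partial order (reflexive, antisymmetric, transitive) on the set of strongly primitive vectors ℤ²_* := {(x,y) ∈ ℤ² : gcd(x,y)=1 and the last nonzero coordinate is positive}. -/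
/-- A vector `(x,y) ∈ ℤ²` is strongly primitive if `gcd(x,y) = 1` and the last
nonzero coordinate is positive. -/
def StronglyPrimitive (p : ℤ × ℤ) : Prop :=
  Int.gcd p.1 p.2 = 1 ∧ (0 < p.2 ∨ (p.2 = 0 ∧ 0 < p.1))

/-- The relation `x ⪯ y`: `Eᵢ(x) ≤ Eᵢ(y)` for `i = 1,2,3`. -/
def Preceq (x y : ℤ × ℤ) : Prop :=
  x.2 ^ 2 ≤ y.2 ^ 2 ∧
  x.1 ^ 2 + x.2 ^ 2 ≤ y.1 ^ 2 + y.2 ^ 2 ∧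
  x.1 ^ 2 + x.1 * x.2 + x.2 ^ 2 ≤ y.1 ^ 2 + y.1 * y.2 + y.2 ^ 2

/-- `⪯` is a partial order (reflexive, antisymmetric, transitive) on the set of
strongly primitive integer vectors. -/
theorem preceq_partialOrder_on_stronglyPrimitive :
    (∀ x : ℤ × ℤ, StronglyPrimitive x → Preceq x x) ∧
    (∀ x y : ℤ × ℤ, StronglyPrimitive x → StronglyPrimitive y →
      Preceq x y → Preceq y x → x = y) ∧
    (∀ x y z : ℤ × ℤ, StronglyPrimitive x → StronglyPrimitive y → StronglyPrimitive z →
      Preceq x y → Preceq y z → Preceq x z) := by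
  refine ⟨fun x _ => ⟨le_refl _, le_refl _, le_refl _⟩, ?_, ?_⟩
  · rintro ⟨x1, x2⟩ ⟨y1, y2⟩ ⟨_, hx⟩ ⟨_, hy⟩ ⟨h1, h2, h3⟩ ⟨h1', h2', h3'⟩
    simp only at *
    have e1 : x2 ^ 2 = y2 ^ 2 := le_antisymm h1 h1'
    have e2 : x1 ^ 2 = y1 ^ 2 := by nlinarith
    have e3 : x1 * x2 = y1 * y2 := by nlinarith
    have hx2 : 0 ≤ x2 := by rcases hx with h | ⟨h, _⟩ <;> omega
    have hy2 : 0 ≤ y2 := by rcases hy with h | ⟨h, _⟩ <;> omega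
    have ex : x2 = y2 := by nlinarith [sq_nonneg (x2 - y2), sq_nonneg (x2 + y2)]
    have ey : x1 = y1 := by
      rcases hx with h | ⟨h, hp⟩
      · rw [← ex] at e3
        exact mul_right_cancel₀ (by omega : x2 ≠ 0) e3
      · subst h
        rcases hy with h' | ⟨h', hp'⟩
        · omega
        · subst h'
          nlinarith [sq_nonneg (x1 - y1), sq_nonneg (x1 + y1)]
    simp [ex, ey]
  · rintro x y z _ _ _ ⟨h1, h2, h3⟩ ⟨h1', h2', h3'⟩
    exact ⟨h1.trans h1', h2.trans h2', h3.trans h3'⟩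
end

section
/- Every positive-definite real binary quadratic form is GL₂(ℤ)-equivalent to a unique reduced form, where Q' is reduced if its coefficients (q₁₁, q₂₂, q₁₂) satisfy q₂₂ ≥ q₁₁ ≥ q₁₂ ≥ 0 and q₁₁ > 0. -/
/-!
A positive-definite form is below any given bound at only finitely many points of `ℤ²`, so it
attains a minimum `m` on `ℤ² \ {0}`, necessarily at a primitive vector. Completing that vector to
a basis of `ℤ²` makes `m` the first coefficient; a shear `x ↦ x + k y` and possibly `y ↦ -y` move
the middle coefficient into `[0, m]`, and the last coefficient, being a value of the form, is at
least `m`.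

A reduced form `(a, b, c)` takes values `≥ c` off the `x`-axis, so its minimum is `a`: equivalent
reduced forms share `a`, and they share the discriminant. If the transformation moves `e₁` off
the `x`-axis, the minimum is attained there too, so `c = a` in both forms and `b² = b'²`; otherwise
it is a shear up to signs, and `b ≡ ±b' (mod 2a)` with `b, b' ∈ [0, a]` forces `b = b'`.
-/

def binaryForm (a b c x y : ℝ) : ℝ := a * x ^ 2 + b * x * y + c * y ^ 2

def SubstEq (p q r s : ℤ) (f g : ℝ → ℝ → ℝ) : Prop :=
  ∀ x y : ℝ, f x y = g (p * x + q * y) (r * x + s * y)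

def GL2Equiv (f g : ℝ → ℝ → ℝ) : Prop :=
  ∃ p q r s : ℤ, (p * s - q * r = 1 ∨ p * s - q * r = -1) ∧ SubstEq p q r s f g

def IsReducedForm (a b c : ℝ) : Prop := a ≤ c ∧ b ≤ a ∧ 0 ≤ b ∧ 0 < a

namespace SubstEq

variable {p q r s : ℤ} {f g : ℝ → ℝ → ℝ}

theorem inv {d : ℤ} (h : SubstEq p q r s f g) (hdet : p * s - q * r = d) (hd : IsUnit d) :
    SubstEq (d * s) (-d * q) (-d * r) (d * p) g f := by
  have hdd : ((d : ℝ)) * d = 1 := by exact_mod_cast Int.isUnit_mul_self hd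
  have hdetR : (p : ℝ) * s - q * r = d := by exact_mod_cast hdet
  intro x y
  rw [h]
  push_cast
  congr 1
  · linear_combination -x * d * hdetR - x * hdd
  · linear_combination -y * d * hdetR - y * hdd

theorem trans {p' q' r' s' : ℤ} {k : ℝ → ℝ → ℝ} (h₁ : SubstEq p q r s f g)
    (h₂ : SubstEq p' q' r' s' g k) :
    SubstEq (p' * p + q' * r) (p' * q + q' * s) (r' * p + s' * r) (r' * q + s' * s) f k := by
  intro x y
  rw [h₁, h₂]
  push_cast
  congr 1 <;> ring

end SubstEq

theorem prod_mk_linear_ne_zero {p q r s x y : ℤ} (hdet : IsUnit (p * s - q * r))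
    (hxy : (x, y) ≠ 0) : (p * x + q * y, r * x + s * y) ≠ 0 := by
  contrapose! hxy
  simp only [Prod.mk_eq_zero] at hxy ⊢
  obtain ⟨h₁, h₂⟩ := hxy
  have hdet0 : p * s - q * r ≠ 0 := hdet.ne_zero
  constructor
  · have : (p * s - q * r) * x = 0 := by linear_combination s * h₁ - q * h₂
    exact (mul_eq_zero.mp this).resolve_left hdet0
  · have : (p * s - q * r) * y = 0 := by linear_combination p * h₂ - r * h₁
    exact (mul_eq_zero.mp this).resolve_left hdet0

namespace GL2Equiv

variable {f g k : ℝ → ℝ → ℝ}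

theorem symm (h : GL2Equiv f g) : GL2Equiv g f := by
  obtain ⟨p, q, r, s, hdet, h⟩ := h
  have hunit : IsUnit (p * s - q * r) := Int.isUnit_iff.mpr hdet
  refine ⟨_, _, _, _, Int.isUnit_iff.mp ?_, h.inv rfl hunit⟩
  convert hunit using 1
  linear_combination (p * s - q * r) * Int.isUnit_mul_self hunit

theorem trans (h₁ : GL2Equiv f g) (h₂ : GL2Equiv g k) : GL2Equiv f k := by
  obtain ⟨p, q, r, s, hdet₁, h₁⟩ := h₁
  obtain ⟨p', q', r', s', hdet₂, h₂⟩ := h₂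
  refine ⟨_, _, _, _, ?_, h₁.trans h₂⟩
  rw [← Int.isUnit_iff] at hdet₁ hdet₂ ⊢
  convert hdet₂.mul hdet₁ using 1
  ring

theorem exists_apply_eq (h : GL2Equiv f g) {x y : ℤ} (hxy : (x, y) ≠ 0) :
    ∃ v : ℤ × ℤ, v ≠ 0 ∧ f x y = g v.1 v.2 := by
  obtain ⟨p, q, r, s, hdet, h⟩ := h
  refine ⟨_, prod_mk_linear_ne_zero (Int.isUnit_iff.mpr hdet) hxy, ?_⟩
  rw [h]
  push_cast
  rfl

end GL2Equiv

section BinaryForm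

variable {a b c : ℝ}

theorem binaryForm_linear (a b c p q r s x y : ℝ) :
    binaryForm a b c (p * x + q * y) (r * x + s * y) =
      binaryForm (binaryForm a b c p r) (2 * a * p * q + b * (p * s + q * r) + 2 * c * r * s)
        (binaryForm a b c q s) x y := by
  unfold binaryForm; ring

theorem substEq_binaryForm (a b c : ℝ) (p q r s : ℤ) :
    SubstEq p q r s
      (binaryForm (binaryForm a b c p r) (2 * a * p * q + b * (p * s + q * r) + 2 * c * r * s)
        (binaryForm a b c q s)) (binaryForm a b c) :=
  fun _ _ ↦ (binaryForm_linear ..).symm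

theorem binaryForm_mul_mul (g x y : ℝ) :
    binaryForm a b c (x * g) (y * g) = g ^ 2 * binaryForm a b c x y := by
  unfold binaryForm; ring

theorem binaryForm_inj {a' b' c' : ℝ} (h : binaryForm a b c = binaryForm a' b' c') :
    a = a' ∧ b = b' ∧ c = c' := by
  have h₁₀ := congrFun₂ h 1 0
  have h₀₁ := congrFun₂ h 0 1
  have h₁₁ := congrFun₂ h 1 1
  simp only [binaryForm] at h₁₀ h₀₁ h₁₁
  exact ⟨by linear_combination h₁₀, by linear_combination h₁₁ - h₁₀ - h₀₁,
    by linear_combination h₀₁⟩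

theorem SubstEq.coeffs_eq {a' b' c' : ℝ} {p q r s : ℤ}
    (h : SubstEq p q r s (binaryForm a' b' c') (binaryForm a b c)) :
    a' = binaryForm a b c p r ∧ b' = 2 * a * p * q + b * (p * s + q * r) + 2 * c * r * s ∧
      c' = binaryForm a b c q s :=
  binaryForm_inj <| funext₂ fun x y ↦ (h x y).trans (binaryForm_linear ..)

theorem discrim_linear (a b c p q r s : ℝ) :
    discrim (binaryForm a b c p r) (2 * a * p * q + b * (p * s + q * r) + 2 * c * r * s)
      (binaryForm a b c q s) = (p * s - q * r) ^ 2 * discrim a b c := by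
  unfold discrim binaryForm; ring

theorem four_mul_binaryForm (x y : ℝ) :
    4 * a * binaryForm a b c x y = (2 * a * x + b * y) ^ 2 - discrim a b c * y ^ 2 := by
  unfold discrim binaryForm; ring

theorem neg_discrim_mul_sq_snd_le (x y : ℝ) :
    -discrim a b c * y ^ 2 ≤ 4 * a * binaryForm a b c x y := by
  rw [four_mul_binaryForm]
  nlinarith [sq_nonneg (2 * a * x + b * y)]

theorem neg_discrim_mul_sq_fst_le (x y : ℝ) :
    -discrim a b c * x ^ 2 ≤ 4 * c * binaryForm a b c x y := by
  have h : 4 * c * binaryForm a b c x y = (2 * c * y + b * x) ^ 2 - discrim a b c * x ^ 2 := by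
    unfold discrim binaryForm; ring
  rw [h]
  nlinarith [sq_nonneg (2 * c * y + b * x)]

theorem pos_of_discrim_neg (ha : 0 < a) (hd : discrim a b c < 0) : 0 < c := by
  unfold discrim at hd; nlinarith [sq_nonneg b]

theorem binaryForm_pos (ha : 0 < a) (hd : discrim a b c < 0) {x y : ℝ} (hxy : (x, y) ≠ 0) :
    0 < binaryForm a b c x y := by
  have key := four_mul_binaryForm (a := a) (b := b) (c := c) x y
  rcases eq_or_ne y 0 with rfl | hy
  · have hx : x ≠ 0 := by simpa using hxy
    simp only [binaryForm, mul_zero, zero_pow two_ne_zero, add_zero]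
    positivity
  · nlinarith [sq_nonneg (2 * a * x + b * y), sq_pos_of_ne_zero hy]

theorem Int.finite_setOf_sq_le (M : ℝ) : {x : ℤ | (x : ℝ) ^ 2 ≤ M}.Finite := by
  refine (Set.finite_Icc (-⌈M⌉) ⌈M⌉).subset fun x (hx : (x : ℝ) ^ 2 ≤ M) ↦ ?_
  have hM : x ^ 2 ≤ ⌈M⌉ := by exact_mod_cast hx.trans (Int.le_ceil M)
  have := Int.le_self_sq x
  have := Int.le_self_sq (-x)
  constructor <;> nlinarith

theorem finite_setOf_binaryForm_le (ha : 0 < a) (hd : discrim a b c < 0) (t : ℝ) :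
    {v : ℤ × ℤ | binaryForm a b c v.1 v.2 ≤ t}.Finite := by
  have hc := pos_of_discrim_neg ha hd
  refine ((Int.finite_setOf_sq_le (4 * c * t / -discrim a b c)).prod
    (Int.finite_setOf_sq_le (4 * a * t / -discrim a b c))).subset fun v hv ↦ ?_
  have hv : binaryForm a b c v.1 v.2 ≤ t := hv
  have hx := neg_discrim_mul_sq_fst_le (a := a) (b := b) (c := c) v.1 v.2
  have hy := neg_discrim_mul_sq_snd_le (a := a) (b := b) (c := c) v.1 v.2
  have hD : 0 < -discrim a b c := neg_pos.mpr hd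
  exact ⟨(le_div_iff₀ hD).2 (by nlinarith), (le_div_iff₀ hD).2 (by nlinarith)⟩

end BinaryForm

section Existence

variable {a b c : ℝ}

theorem exists_min_binaryForm (ha : 0 < a) (hd : discrim a b c < 0) :
    ∃ v : ℤ × ℤ, v ≠ 0 ∧
      ∀ w : ℤ × ℤ, w ≠ 0 → binaryForm a b c v.1 v.2 ≤ binaryForm a b c w.1 w.2 := by
  have : Northcott (fun v : ℤ × ℤ ↦ binaryForm a b c v.1 v.2) :=
    ⟨finite_setOf_binaryForm_le ha hd⟩
  exact Northcott.exists_min_image _ {v | v ≠ 0} ⟨(1, 0), by simp⟩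

theorem isCoprime_of_binaryForm_min (ha : 0 < a) (hd : discrim a b c < 0) {p r : ℤ}
    (hpr : (p, r) ≠ 0)
    (hmin : ∀ w : ℤ × ℤ, w ≠ 0 → binaryForm a b c p r ≤ binaryForm a b c w.1 w.2) :
    IsCoprime p r := by
  have hg : 0 < Int.gcd p r := Int.gcd_pos_iff.mpr <| by
    contrapose! hpr
    simp [hpr.1, hpr.2]
  obtain ⟨p', r', -, hp, hr⟩ := Int.exists_gcd_one hg
  have hpr' : (p', r') ≠ 0 := by
    rintro h0
    obtain ⟨rfl, rfl⟩ := Prod.mk_eq_zero.mp h0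
    rw [zero_mul] at hp hr
    exact hpr (by rw [hp, hr]; rfl)
  have hpos : 0 < binaryForm a b c p r := binaryForm_pos ha hd (by simpa using hpr)
  have hscale : binaryForm a b c p r = (Int.gcd p r : ℝ) ^ 2 * binaryForm a b c p' r' := by
    rw [← binaryForm_mul_mul]
    congr 1
    exacts [by exact_mod_cast hp, by exact_mod_cast hr]
  have hsq : (Int.gcd p r : ℝ) ^ 2 ≤ 1 := by nlinarith [hmin _ hpr']
  have : Int.gcd p r ≤ 1 := by
    exact_mod_cast (pow_le_one_iff_of_nonneg (by positivity) two_ne_zero).mp hsq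
  exact Int.isCoprime_iff_gcd_eq_one.mpr (by omega)

theorem exists_gl2Equiv_first_coeff {p r : ℤ} (hpr : IsCoprime p r) :
    ∃ B C : ℝ, GL2Equiv (binaryForm a b c) (binaryForm (binaryForm a b c p r) B C) := by
  obtain ⟨u, v, huv⟩ := hpr
  exact ⟨_, _, GL2Equiv.symm
    ⟨p, -v, r, u, Or.inl (by linear_combination huv), substEq_binaryForm a b c p (-v) r u⟩⟩

theorem exists_gl2Equiv_middle_coeff_mem {m : ℝ} (hm : 0 < m) (B C : ℝ) :
    ∃ B' C' : ℝ, (0 ≤ B' ∧ B' ≤ m) ∧ GL2Equiv (binaryForm m B C) (binaryForm m B' C') := by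
  set R := round (B / (2 * m))
  have hR : |B - 2 * m * R| ≤ m := by
    have e : B - 2 * m * R = 2 * m * (B / (2 * m) - R) := by field_simp
    rw [e, abs_mul, abs_of_pos (by positivity)]
    nlinarith [abs_sub_round (B / (2 * m))]
  obtain ⟨ε, hε, hεR⟩ : ∃ ε : ℤ, (ε = 1 ∨ ε = -1) ∧ ε * (B - 2 * m * R) = |B - 2 * m * R| := by
    rcases le_or_gt 0 (B - 2 * m * R) with h | h
    · exact ⟨1, Or.inl rfl, by simp [abs_of_nonneg h]⟩
    · exact ⟨-1, Or.inr rfl, by simp [abs_of_neg h]⟩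
  refine ⟨_, binaryForm m B C (-ε * R : ℤ) ε, ⟨abs_nonneg _, hR⟩,
    GL2Equiv.symm ⟨1, -ε * R, 0, ε, by simpa using hε, ?_⟩⟩
  convert substEq_binaryForm m B C 1 (-ε * R) 0 ε using 2
  · simp [binaryForm]
  · push_cast
    linear_combination -hεR

theorem exists_isReducedForm_gl2Equiv (ha : 0 < a) (hd : discrim a b c < 0) :
    ∃ A B C : ℝ, IsReducedForm A B C ∧ GL2Equiv (binaryForm a b c) (binaryForm A B C) := by
  obtain ⟨⟨p, r⟩, hpr, hmin⟩ := exists_min_binaryForm ha hd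
  have hm : 0 < binaryForm a b c p r := binaryForm_pos ha hd (by simpa using hpr)
  obtain ⟨B₁, C₁, h₁⟩ := exists_gl2Equiv_first_coeff (a := a) (b := b) (c := c)
    (isCoprime_of_binaryForm_min ha hd hpr hmin)
  obtain ⟨B, C, ⟨hB, hBm⟩, h₂⟩ := exists_gl2Equiv_middle_coeff_mem hm B₁ C₁
  have h := h₁.trans h₂
  obtain ⟨w, hw, hCw⟩ := h.symm.exists_apply_eq (x := 0) (y := 1) (by simp)
  have hC : binaryForm (binaryForm a b c p r) B C ((0 : ℤ) : ℝ) ((1 : ℤ) : ℝ) = C := by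
    simp [binaryForm]
  exact ⟨_, B, C, ⟨hC ▸ hCw ▸ hmin w hw, hBm, hB, hm⟩, h⟩

end Existence

section Uniqueness

variable {a b c : ℝ}

theorem IsReducedForm.third_coeff_le (h : IsReducedForm a b c) {x y : ℤ} (hy : y ≠ 0) :
    c ≤ binaryForm a b c x y := by
  obtain ⟨hac, hba, hb, ha⟩ := h
  have hY : 1 ≤ |(y : ℝ)| := by exact_mod_cast Int.one_le_abs hy
  have hXY : |(y : ℝ)| ≤ |(x : ℝ)| ∨ |(x : ℝ)| + 1 ≤ |(y : ℝ)| := by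
    rcases le_or_gt |y| |x| with h | h
    · left; exact_mod_cast h
    · right; exact_mod_cast Int.add_one_le_of_lt h
  set X : ℝ := |(x : ℝ)|
  set Y : ℝ := |(y : ℝ)|
  have hX : 0 ≤ X := abs_nonneg _
  have hmid : -b * (X * Y) ≤ b * x * y := by
    have : -(X * Y) ≤ x * y := by rw [← abs_mul]; exact neg_abs_le _
    nlinarith
  have key : c ≤ a * X ^ 2 - b * (X * Y) + c * Y ^ 2 := by
    rcases hXY with hXY | hXY
    · nlinarith [mul_nonneg hX (by nlinarith : 0 ≤ a * X - b * Y),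
        mul_nonneg (by linarith : 0 ≤ c) (by nlinarith : 0 ≤ Y ^ 2 - 1)]
    · nlinarith [mul_nonneg (mul_nonneg hX (by linarith : 0 ≤ Y)) (by linarith : 0 ≤ c - b),
        mul_nonneg (by linarith : 0 ≤ c) (by nlinarith : 0 ≤ Y * (Y - X - 1) + (Y - 1))]
  rw [sq_abs, sq_abs] at key
  unfold binaryForm
  linarith

theorem IsReducedForm.first_coeff_le (h : IsReducedForm a b c) {x y : ℤ} (hxy : (x, y) ≠ 0) :
    a ≤ binaryForm a b c x y := by
  rcases eq_or_ne y 0 with rfl | hy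
  · have hx : (1 : ℝ) ≤ (x : ℝ) ^ 2 := by
      exact_mod_cast (one_le_sq_iff_one_le_abs _).mpr (Int.one_le_abs (by simpa using hxy))
    simp only [binaryForm, Int.cast_zero, mul_zero, zero_pow two_ne_zero, add_zero]
    nlinarith [h.2.2.2]
  · exact h.1.trans (h.third_coeff_le hy)

theorem IsReducedForm.le_of_substEq {a' b' c' : ℝ} {p q r s : ℤ} (h : IsReducedForm a b c)
    (ha' : 0 < a') (hsubst : SubstEq p q r s (binaryForm a' b' c') (binaryForm a b c)) :
    a ≤ a' ∧ (r ≠ 0 → c ≤ a') := by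
  have ha := hsubst.coeffs_eq.1
  have hpr : (p, r) ≠ 0 := by
    rintro h0
    obtain ⟨rfl, rfl⟩ := Prod.mk_eq_zero.mp h0
    simp [binaryForm] at ha
    linarith
  exact ⟨ha ▸ h.first_coeff_le hpr, fun hr ↦ ha ▸ h.third_coeff_le hr⟩

theorem eq_of_eq_two_mul_add {a b b' : ℝ} (n ε : ℤ) (hε : ε = 1 ∨ ε = -1)
    (hb : 0 ≤ b ∧ b ≤ a) (hb' : 0 ≤ b' ∧ b' ≤ a) (h : b = 2 * a * n + ε * b') : b = b' := by
  obtain ⟨hb, hba⟩ := hb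
  obtain ⟨hb', hb'a⟩ := hb'
  have ha : 0 ≤ a := hb.trans hba
  obtain hn | rfl | hn : n ≤ -1 ∨ n = 0 ∨ 1 ≤ n := by omega
  · have hn : (n : ℝ) ≤ -1 := by exact_mod_cast hn
    rcases hε with rfl | rfl <;> push_cast at h <;> nlinarith [mul_le_mul_of_nonneg_left hn ha]
  · rcases hε with rfl | rfl <;> push_cast at h <;> linarith
  · have hn : (1 : ℝ) ≤ n := by exact_mod_cast hn
    rcases hε with rfl | rfl <;> push_cast at h <;> nlinarith [mul_le_mul_of_nonneg_left hn ha]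

theorem IsReducedForm.eq_of_gl2Equiv {a' b' c' : ℝ} (h : IsReducedForm a b c)
    (h' : IsReducedForm a' b' c') (hequiv : GL2Equiv (binaryForm a b c) (binaryForm a' b' c')) :
    a = a' ∧ b = b' ∧ c = c' := by
  obtain ⟨p, q, r, s, hdet, hsubst⟩ := hequiv
  have hunit : IsUnit (p * s - q * r) := Int.isUnit_iff.mpr hdet
  obtain ⟨ha'a, hc'a⟩ := h'.le_of_substEq h.2.2.2 hsubst
  obtain ⟨haa', hca'⟩ := h.le_of_substEq h'.2.2.2 (hsubst.inv rfl hunit)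
  have ha : a = a' := le_antisymm haa' ha'a
  obtain ⟨hA, hB, hC⟩ := hsubst.coeffs_eq
  have hdisc : discrim a b c = discrim a' b' c' := by
    have hdet2 : ((p : ℝ) * s - q * r) ^ 2 = 1 := by exact_mod_cast Int.isUnit_sq hunit
    rw [hA, hB, hC, discrim_linear, hdet2, one_mul]
  suffices hb : b = b' by
    refine ⟨ha, hb, ?_⟩
    unfold discrim at hdisc
    subst ha hb
    have : 4 * a * (c - c') = 0 := by linear_combination -hdisc
    linarith [(mul_eq_zero.mp this).resolve_left (by linarith [h.2.2.2])]
  -- `(p, r)` is the image of `e₁` under the substitution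
  rcases eq_or_ne r 0 with rfl | hr
  · refine eq_of_eq_two_mul_add (p * q) (p * s) (by simpa using hdet) ⟨h.2.2.1, ha ▸ h.2.1⟩
      ⟨h'.2.2.1, h'.2.1⟩ ?_
    push_cast at hB ⊢
    linear_combination hB
  · have hc : c = a :=
      le_antisymm (ha ▸ hca' (mul_ne_zero (neg_ne_zero.mpr hunit.ne_zero) hr)) h.1
    have hc' : c' = a' := le_antisymm (ha ▸ hc'a hr) h'.1
    unfold discrim at hdisc
    have hsq : b ^ 2 = b' ^ 2 := by
      linear_combination hdisc + 4 * a * hc - 4 * a' * hc' + 4 * (a + a') * ha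
    exact (sq_eq_sq₀ h.2.2.1 h'.2.2.1).mp hsq

end Uniqueness

/-- **Strong fundamental domain.** Every positive-definite real binary quadratic form
`a x² + b xy + c y²` is GL₂(ℤ)-equivalent to a unique reduced form, where a form with
coefficient tuple `(q₁₁, q₂₂, q₁₂)` is reduced if `q₂₂ ≥ q₁₁ ≥ q₁₂ ≥ 0` and `q₁₁ > 0`. -/
theorem unique_reduced_form (a c b : ℝ) (ha : 0 < a) (hd : b ^ 2 - 4 * a * c < 0) :
    ∃! T : ℝ × ℝ × ℝ,
      (T.2.1 ≥ T.1 ∧ T.1 ≥ T.2.2 ∧ T.2.2 ≥ 0 ∧ 0 < T.1) ∧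
      ∃ p q r s : ℤ, (p * s - q * r = 1 ∨ p * s - q * r = -1) ∧
        ∀ x y : ℝ, a * x ^ 2 + b * x * y + c * y ^ 2 =
          T.1 * ((p : ℝ) * x + q * y) ^ 2
            + T.2.2 * ((p : ℝ) * x + q * y) * ((r : ℝ) * x + s * y)
            + T.2.1 * ((r : ℝ) * x + s * y) ^ 2 := by
  obtain ⟨A, B, C, hred, hequiv⟩ := exists_isReducedForm_gl2Equiv ha hd
  refine ⟨(A, C, B), ⟨hred, hequiv⟩, ?_⟩
  rintro ⟨A', C', B'⟩ ⟨hred', hequiv'⟩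
  have hequiv' : GL2Equiv (binaryForm a b c) (binaryForm A' B' C') := hequiv'
  obtain ⟨rfl, rfl, rfl⟩ := IsReducedForm.eq_of_gl2Equiv hred' hred (hequiv'.symm.trans hequiv)
  rfl
end
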